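/- The integral of x²·φ(x)·Φ(x)² over the real line equals 1/3 + 1/(2π√3), where φ and Φ are the density and cdf of the standard normal distribution. -/

import Mathlib

open Real MeasureTheory

noncomputable def phi (x : ℝ) : ℝ := (1 / Real.sqrt (2 * Real.pi)) * Real.exp (-x ^ 2 / 2)

noncomputable def Phi (x : ℝ) : ℝ := ∫ t in Set.Iic x, phi t

/-!
Integrating by parts twice produces an explicit antiderivative of `x² φ Φ²`. Since `φ' = -x φ`,
`x² φ Φ² = (-x φ Φ²)' + φ Φ² + 2 x φ² Φ`, with `φ Φ² = (Φ³/3)'` and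
`2 x φ² Φ = (-φ² Φ)' + φ³`. Finally `φ(x)³ = φ(√3 x) / (2π)`, whose antiderivative is
`Φ(√3 x) / (2π√3)`. The antiderivative tends to `0` at `-∞` and to `1/3 + 1/(2π√3)` at `+∞`.
-/

open Filter Set Topology ProbabilityTheory

lemma phi_eq_gaussianPDFReal : phi = gaussianPDFReal 0 1 := by
  ext x
  simp [phi, gaussianPDFReal]

lemma phi_nonneg (x : ℝ) : 0 ≤ phi x := by
  rw [phi_eq_gaussianPDFReal]
  exact gaussianPDFReal_nonneg 0 1 x

lemma continuous_phi : Continuous phi := by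
  unfold phi
  fun_prop

lemma integrable_phi : Integrable phi :=
  phi_eq_gaussianPDFReal ▸ integrable_gaussianPDFReal 0 1

lemma integral_phi : ∫ x, phi x = 1 := by
  rw [phi_eq_gaussianPDFReal]
  exact integral_gaussianPDFReal_eq_one 0 one_ne_zero

lemma hasDerivAt_phi (x : ℝ) : HasDerivAt phi (-x * phi x) x := by
  have h : HasDerivAt (fun y : ℝ => -y ^ 2 / 2) (-x) x :=
    ((hasDerivAt_pow 2 x).neg.div_const 2).congr_deriv (by ring)
  exact (h.exp.const_mul (1 / √(2 * π))).congr_deriv (by rw [phi]; ring)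

lemma phi_sqrt_three_mul (x : ℝ) : phi (√3 * x) = 2 * π * phi x ^ 3 := by
  have hexp : rexp (-(√3 * x) ^ 2 / 2) = rexp (-x ^ 2 / 2) ^ 3 := by
    rw [← Real.exp_nat_mul, mul_pow, Real.sq_sqrt (by norm_num)]
    ring_nf
  unfold phi
  rw [hexp]
  field_simp
  exact Real.sq_sqrt (by positivity)

lemma tendsto_phi_cocompact : Tendsto phi (cocompact ℝ) (𝓝 0) := by
  have h := (tendsto_rpow_abs_mul_exp_neg_mul_sq_cocompact one_half_pos 0).const_mul
    (1 / √(2 * π))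
  rw [mul_zero] at h
  refine h.congr fun x => ?_
  simp only [rpow_zero, one_mul, phi]
  ring_nf

lemma tendsto_mul_phi_cocompact : Tendsto (fun x => x * phi x) (cocompact ℝ) (𝓝 0) := by
  have h := (tendsto_rpow_abs_mul_exp_neg_mul_sq_cocompact one_half_pos 1).const_mul
    (1 / √(2 * π))
  rw [mul_zero] at h
  refine tendsto_zero_iff_norm_tendsto_zero.mpr (h.congr fun x => ?_)
  rw [norm_mul, Real.norm_eq_abs, Real.norm_of_nonneg (phi_nonneg x), rpow_one, phi]
  ring_nf

lemma integrable_sq_mul_phi : Integrable fun x : ℝ => x ^ 2 * phi x := by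
  refine ((integrable_rpow_mul_exp_neg_mul_sq one_half_pos (s := 2) (by norm_num)).const_mul
    (1 / √(2 * π))).congr (Eventually.of_forall fun x => ?_)
  simp only [phi]
  norm_cast
  ring_nf

lemma Phi_nonneg (x : ℝ) : 0 ≤ Phi x :=
  setIntegral_nonneg measurableSet_Iic fun t _ => phi_nonneg t

lemma Phi_le_one (x : ℝ) : Phi x ≤ 1 :=
  integral_phi ▸ setIntegral_le_integral integrable_phi (Eventually.of_forall phi_nonneg)

lemma hasDerivAt_Phi (x : ℝ) : HasDerivAt Phi (phi x) x := by
  have hPhi : ∀ y, Phi y = Phi 0 + ∫ t in (0 : ℝ)..y, phi t := fun y => by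
    rw [Phi, Phi, ← intervalIntegral.integral_Iic_sub_Iic integrable_phi.integrableOn
      integrable_phi.integrableOn]
    ring
  rw [funext hPhi]
  exact ((continuous_phi.integral_hasStrictDerivAt 0 x).hasDerivAt).const_add _

lemma continuous_Phi : Continuous Phi :=
  continuous_iff_continuousAt.mpr fun x => (hasDerivAt_Phi x).continuousAt

lemma tendsto_Phi_atTop : Tendsto Phi atTop (𝓝 1) :=
  integral_phi ▸ (aecover_Iic tendsto_id).integral_tendsto_of_countably_generated integrable_phi

lemma tendsto_Phi_atBot : Tendsto Phi atBot (𝓝 0) := by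
  have hPhi : ∀ x, Phi x = (∫ t, phi t) - ∫ t in Ioi x, phi t := fun x => by
    rw [Phi, ← intervalIntegral.integral_Iic_add_Ioi integrable_phi.integrableOn
      integrable_phi.integrableOn]
    ring
  have h := (aecover_Ioi tendsto_id).integral_tendsto_of_countably_generated integrable_phi
  simpa [← hPhi] using (tendsto_const_nhds (x := ∫ t, phi t)).sub h

lemma integrable_sq_mul_phi_mul_Phi_sq : Integrable fun x => x ^ 2 * phi x * Phi x ^ 2 := by
  refine integrable_sq_mul_phi.mono'
    (((continuous_pow 2).mul continuous_phi).mul (continuous_Phi.pow 2)).aestronglyMeasurable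
    (Eventually.of_forall fun x => ?_)
  have h0 : 0 ≤ x ^ 2 * phi x := mul_nonneg (sq_nonneg x) (phi_nonneg x)
  rw [Real.norm_of_nonneg (mul_nonneg h0 (sq_nonneg _))]
  exact mul_le_of_le_one_right h0 (pow_le_one₀ (Phi_nonneg x) (Phi_le_one x))

noncomputable def antiderivSqPhiPhiSq (x : ℝ) : ℝ :=
  -(x * phi x * Phi x ^ 2) + Phi x ^ 3 / 3 - phi x ^ 2 * Phi x
    + Phi (√3 * x) / (2 * π * √3)

lemma hasDerivAt_antiderivSqPhiPhiSq (x : ℝ) :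
    HasDerivAt antiderivSqPhiPhiSq (x ^ 2 * phi x * Phi x ^ 2) x := by
  have hphi := hasDerivAt_phi x
  have hPhi := hasDerivAt_Phi x
  have hPhi_sqrt_three : HasDerivAt (fun y => Phi (√3 * y)) (2 * π * √3 * phi x ^ 3) x := by
    refine ((hasDerivAt_Phi (√3 * x)).comp x ((hasDerivAt_id x).const_mul √3)).congr_deriv ?_
    rw [phi_sqrt_three_mul]
    ring
  refine (((((hasDerivAt_id x).mul hphi).mul (hPhi.pow 2)).neg.add
    ((hPhi.pow 3).div_const 3)).sub ((hphi.pow 2).mul hPhi)).add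
    (hPhi_sqrt_three.div_const (2 * π * √3)) |>.congr_deriv ?_
  simp only [id, Pi.mul_apply, Pi.pow_apply]
  field_simp
  ring

lemma tendsto_antiderivSqPhiPhiSq {l : Filter ℝ} {p : ℝ} (hl : l ≤ cocompact ℝ)
    (hPhi : Tendsto Phi l (𝓝 p)) (hPhi_sqrt_three : Tendsto (fun x => Phi (√3 * x)) l (𝓝 p)) :
    Tendsto antiderivSqPhiPhiSq l (𝓝 (p ^ 3 / 3 + p / (2 * π * √3))) := by
  have hphi := tendsto_phi_cocompact.mono_left hl
  have hxphi := tendsto_mul_phi_cocompact.mono_left hl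
  convert (((hxphi.mul (hPhi.pow 2)).neg.add ((hPhi.pow 3).div_const 3)).sub
    ((hphi.pow 2).mul hPhi)).add (hPhi_sqrt_three.div_const (2 * π * √3)) using 1
  · rfl
  · congr 1
    ring

theorem stmt0 :
    ∫ x : ℝ, x ^ 2 * phi x * (Phi x) ^ 2 =
      1 / 3 + 1 / (2 * Real.pi * Real.sqrt 3) := by
  have hsqrt_three : 0 < √3 := by positivity
  have htop := tendsto_antiderivSqPhiPhiSq atTop_le_cocompact tendsto_Phi_atTop
    (tendsto_Phi_atTop.comp (tendsto_id.const_mul_atTop hsqrt_three))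
  have hbot := tendsto_antiderivSqPhiPhiSq atBot_le_cocompact tendsto_Phi_atBot
    (tendsto_Phi_atBot.comp (tendsto_id.const_mul_atBot hsqrt_three))
  rw [integral_of_hasDerivAt_of_tendsto hasDerivAt_antiderivSqPhiPhiSq
    integrable_sq_mul_phi_mul_Phi_sq hbot htop]
  ring
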